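/- arXiv:2408.04357 — 2 statements merged into one kernel-verified Lean document; each statement's English description precedes it below -/
import Mathlib

section
/- Let A be an entrywise nonnegative n×n matrix. For α_1, α_2 with 0 ≤ α_1 < α_2 ≤ 1/2 and α = (α_1 + α_2 − 1)/(2α_1 − 1), we have α ∈ (0,1) and S_{α_2}(A) = S_α(S_{α_1}(A)), where S_β(A) is the matrix with (i,j)-entry a_{ij}^β a_{ji}^{1−β}. -/
/-- The weighted geometric symmetrization `S_β(A)` with entries `a_{ij}^β a_{ji}^{1-β}`. -/
noncomputable def wgs {n : ℕ} (β : ℝ) (A : Matrix (Fin n) (Fin n) ℝ) :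
    Matrix (Fin n) (Fin n) ℝ :=
  Matrix.of fun i j => A i j ^ β * A j i ^ (1 - β)

/-- For `0 ≤ α₁ < α₂ ≤ 1/2` and `α = (α₁ + α₂ - 1)/(2α₁ - 1)`, one has
`α ∈ (0,1)` and `S_{α₂}(A) = S_α(S_{α₁}(A))`. -/
theorem wgs_comp_left {n : ℕ} (A : Matrix (Fin n) (Fin n) ℝ) (hA : ∀ i j, 0 ≤ A i j)
    (α₁ α₂ : ℝ) (h0 : 0 ≤ α₁) (h12 : α₁ < α₂) (h2 : α₂ ≤ 1 / 2) :
    0 < (α₁ + α₂ - 1) / (2 * α₁ - 1) ∧ (α₁ + α₂ - 1) / (2 * α₁ - 1) < 1 ∧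
      wgs α₂ A = wgs ((α₁ + α₂ - 1) / (2 * α₁ - 1)) (wgs α₁ A) := by
  have hd : 2 * α₁ - 1 < 0 := by linarith
  set α : ℝ := (α₁ + α₂ - 1) / (2 * α₁ - 1) with hαdef
  have hmul : α * (2 * α₁ - 1) = α₁ + α₂ - 1 := div_mul_cancel₀ _ (ne_of_lt hd)
  have hα0 : 0 < α := div_pos_of_neg_of_neg (by linarith) hd
  have hα1 : α < 1 := by
    rw [hαdef, div_lt_one_of_neg hd]; linarith
  refine ⟨hα0, hα1, ?_⟩
  have e1 : α₁ * α + (1 - α₁) * (1 - α) = α₂ := by nlinarith [hmul]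
  have e2 : (1 - α₁) * α + α₁ * (1 - α) = 1 - α₂ := by nlinarith [hmul]
  ext i j
  simp only [wgs, Matrix.of_apply]
  set a := A i j with ha
  set b := A j i with hb
  have ha0 : 0 ≤ a := hA i j
  have hb0 : 0 ≤ b := hA j i
  rw [Real.mul_rpow (Real.rpow_nonneg ha0 _) (Real.rpow_nonneg hb0 _),
      Real.mul_rpow (Real.rpow_nonneg hb0 _) (Real.rpow_nonneg ha0 _),
      ← Real.rpow_mul ha0, ← Real.rpow_mul hb0, ← Real.rpow_mul hb0, ← Real.rpow_mul ha0,
      ← e2, ← e1,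
      Real.rpow_add_of_nonneg ha0 (by nlinarith) (by nlinarith),
      Real.rpow_add_of_nonneg hb0 (by nlinarith) (by nlinarith)]
  ring
end

section
/- Let A be an entrywise nonnegative n×n matrix. For α_1, α_2 with 1/2 ≤ α_1 < α_2 ≤ 1 and α = (α_1 + α_2 − 1)/(2α_2 − 1), we have α ∈ (0,1) and S_{α_1}(A) = S_α(S_{α_2}(A)), where S_β(A)_{ij} = a_{ij}^β a_{ji}^{1−β}. -/
/-!
Entrywise, `S_β (S_γ A)` is a product of powers of `a_{ij}` and `a_{ji}` whose exponents are
`βγ + (1-β)(1-γ)` and its complement, so `S_β ∘ S_γ = S_{βγ + (1-β)(1-γ)}` for weights in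
`[0, 1]`. Solving `α α₂ + (1-α)(1-α₂) = α₁` for `α` gives the stated formula.
-/

open Real Set

-- The weights are kept in `[0, 1]` so that all exponents are nonnegative: at base `0`,
-- `0 ^ x * 0 ^ y = 0 ^ (x + y)` fails when `x + y = 0 ≠ x`.
theorem rpow_mul_rpow_rpow_mul_rpow {a b β γ : ℝ} (ha : 0 ≤ a) (hb : 0 ≤ b)
    (hβ : β ∈ Icc (0 : ℝ) 1) (hγ : γ ∈ Icc (0 : ℝ) 1) :
    (a ^ γ * b ^ (1 - γ)) ^ β * (b ^ γ * a ^ (1 - γ)) ^ (1 - β) =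
      a ^ (β * γ + (1 - β) * (1 - γ)) * b ^ (1 - (β * γ + (1 - β) * (1 - γ))) := by
  obtain ⟨hβ0, hβ1⟩ := hβ
  obtain ⟨hγ0, hγ1⟩ := hγ
  have hb_exp : 1 - (β * γ + (1 - β) * (1 - γ)) = β * (1 - γ) + (1 - β) * γ := by ring
  rw [hb_exp, mul_rpow (by positivity) (by positivity), mul_rpow (by positivity) (by positivity),
    ← rpow_mul ha, ← rpow_mul ha, ← rpow_mul hb, ← rpow_mul hb,
    rpow_add_of_nonneg ha (by positivity) (by nlinarith),
    rpow_add_of_nonneg hb (by nlinarith) (by nlinarith)]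
  ring_nf

theorem wgs_wgs {n : ℕ} {A : Matrix (Fin n) (Fin n) ℝ} (hA : ∀ i j, 0 ≤ A i j) {β γ : ℝ}
    (hβ : β ∈ Icc (0 : ℝ) 1) (hγ : γ ∈ Icc (0 : ℝ) 1) :
    wgs β (wgs γ A) = wgs (β * γ + (1 - β) * (1 - γ)) A := by
  ext i j
  exact rpow_mul_rpow_rpow_mul_rpow (hA i j) (hA j i) hβ hγ

/-- For `1/2 ≤ α₁ < α₂ ≤ 1` and `α = (α₁ + α₂ - 1)/(2α₂ - 1)`, one has
`α ∈ (0,1)` and `S_{α₁}(A) = S_α(S_{α₂}(A))`. -/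
theorem wgs_comp_right {n : ℕ} (A : Matrix (Fin n) (Fin n) ℝ) (hA : ∀ i j, 0 ≤ A i j)
    (α₁ α₂ : ℝ) (h0 : 1 / 2 ≤ α₁) (h12 : α₁ < α₂) (h2 : α₂ ≤ 1) :
    0 < (α₁ + α₂ - 1) / (2 * α₂ - 1) ∧ (α₁ + α₂ - 1) / (2 * α₂ - 1) < 1 ∧
      wgs α₁ A = wgs ((α₁ + α₂ - 1) / (2 * α₂ - 1)) (wgs α₂ A) := by
  set α := (α₁ + α₂ - 1) / (2 * α₂ - 1)
  have hden : 0 < 2 * α₂ - 1 := by linarith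
  have hα_pos : 0 < α := div_pos (by linarith) hden
  have hα_lt : α < 1 := (div_lt_one hden).mpr (by linarith)
  have hweight : α * α₂ + (1 - α) * (1 - α₂) = α₁ := by
    linear_combination div_mul_cancel₀ (α₁ + α₂ - 1) hden.ne'
  refine ⟨hα_pos, hα_lt, ?_⟩
  rw [wgs_wgs hA ⟨hα_pos.le, hα_lt.le⟩ ⟨by linarith, h2⟩, hweight]
end
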